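/- Let c₁, c₂, c₃ be pairwise distinct oriented circles with discriminant D = Q(c₁ − c₂) · Q(c₁ − c₃) · Q(c₂ − c₃) = 0, and suppose it is not the case that Q(c₁ − c₂) = 0, Q(c₁ − c₃) = 0 and Q(c₂ − c₃) = 0 all hold (the three circles are not pairwise orientedly tangent). Then the oriented Apollonius problem for (c₁, c₂, c₃) has exactly 1 solution. -/

import Mathlib

open RealInnerProductSpace

noncomputable section

/-- The Euclidean plane. -/
abbrev Pl := EuclideanSpace ℝ (Fin 2)

/-- The Lorentz quadratic form `Q(x, r) = ‖x‖² − r²` on the space of oriented circles. -/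
def Q (c : Pl × ℝ) : ℝ := ‖c.1‖ ^ 2 - c.2 ^ 2

/-- Solutions of the oriented Apollonius problem for the oriented circles `c₁, c₂, c₃`:
either an oriented circle `d` with `Q(d − cᵢ) = 0` for all `i`, or an oriented line
`(u, t)` (with `‖u‖ = 1`, representing `{p : ⟪u, p⟫ = t}`) tangent to every `cᵢ`,
i.e. `⟪u, xᵢ⟫ − t = rᵢ` for all `i`. The solution set is the disjoint union of the two. -/
def OrientedApolloniusSolutions (c₁ c₂ c₃ : Pl × ℝ) : Type :=
  {d : Pl × ℝ // Q (d - c₁) = 0 ∧ Q (d - c₂) = 0 ∧ Q (d - c₃) = 0} ⊕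
  {l : Pl × ℝ // ‖l.1‖ = 1 ∧ ⟪l.1, c₁.1⟫ - l.2 = c₁.2 ∧ ⟪l.1, c₂.1⟫ - l.2 = c₂.2 ∧
    ⟪l.1, c₃.1⟫ - l.2 = c₃.2}

/-!
Polarize `Q` to the Lorentz form `⟨·,·⟩`; two orthogonal null vectors are proportional.
Say `c₁, c₂` are tangent, so `v = c₁ - c₂` is a nonzero null vector. Then the circles tangent
to both are exactly `c₁ + μ v`, and a line `(u, t)` tangent to both has `(u, 1)` proportional
to `v`, so there is at most one. Tangency to `c₃` reads `Q(c₁ - c₃) + 2μ⟨v, c₁ - c₃⟩ = 0` for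
the circle and `⟨v, c₁ - c₃⟩ = 0` for the line. If `⟨v, c₁ - c₃⟩ ≠ 0` this gives one circle and
no line; otherwise `Q(c₁ - c₃) ≠ 0`, because `Q(c₂ - c₃) = Q(c₁ - c₃) - 2⟨v, c₁ - c₃⟩` and the
three circles are not pairwise tangent, so there is no circle and one line.
-/

def lorentzInner (v w : Pl × ℝ) : ℝ := ⟪v.1, w.1⟫ - v.2 * w.2

lemma lorentzInner_comm (v w : Pl × ℝ) : lorentzInner v w = lorentzInner w v := by
  simp only [lorentzInner, real_inner_comm]; ring

lemma lorentzInner_smul_left (r : ℝ) (v w : Pl × ℝ) :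
    lorentzInner (r • v) w = r * lorentzInner v w := by
  simp only [lorentzInner, Prod.smul_fst, Prod.smul_snd, real_inner_smul_left, smul_eq_mul]; ring

lemma lorentzInner_smul_right (r : ℝ) (v w : Pl × ℝ) :
    lorentzInner v (r • w) = r * lorentzInner v w := by
  rw [lorentzInner_comm, lorentzInner_smul_left, lorentzInner_comm]

lemma lorentzInner_self (v : Pl × ℝ) : lorentzInner v v = Q v := by
  rw [lorentzInner, Q, real_inner_self_eq_norm_sq]; ring

lemma Q_add (v w : Pl × ℝ) : Q (v + w) = Q v + 2 * lorentzInner v w + Q w := by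
  simp only [Q, lorentzInner, Prod.fst_add, Prod.snd_add, norm_add_sq_real]; ring

lemma Q_sub (v w : Pl × ℝ) : Q (v - w) = Q v - 2 * lorentzInner v w + Q w := by
  simp only [Q, lorentzInner, Prod.fst_sub, Prod.snd_sub, norm_sub_sq_real]; ring

lemma Q_smul (r : ℝ) (v : Pl × ℝ) : Q (r • v) = r ^ 2 * Q v := by
  simp only [Q, Prod.smul_fst, Prod.smul_snd, norm_smul, smul_eq_mul, Real.norm_eq_abs,
    mul_pow, sq_abs]; ring

lemma Q_sub_comm (v w : Pl × ℝ) : Q (v - w) = Q (w - v) := by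
  rw [← neg_sub, ← neg_one_smul ℝ, Q_smul]; ring

lemma eq_zero_of_Q_eq_zero_of_snd_eq_zero {v : Pl × ℝ} (hv : Q v = 0) (h₂ : v.2 = 0) :
    v = 0 := by
  have : ‖v.1‖ ^ 2 = 0 := by simpa [Q, h₂] using hv
  exact Prod.ext (by simpa using this) h₂

/-- Equality case of the reversed Cauchy–Schwarz inequality on the light cone. -/
lemma smul_eq_smul_of_Q_eq_zero {v w : Pl × ℝ} (hv : Q v = 0) (hw : Q w = 0)
    (hvw : lorentzInner v w = 0) : v.2 • w = w.2 • v := by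
  have hQ : Q (v.2 • w - w.2 • v) = 0 := by
    rw [Q_sub, Q_smul, Q_smul, lorentzInner_smul_left, lorentzInner_smul_right,
      lorentzInner_comm, hv, hw, hvw]
    ring
  have h₂ : (v.2 • w - w.2 • v).2 = 0 := by
    simp only [Prod.snd_sub, Prod.smul_snd, smul_eq_mul]; ring
  exact sub_eq_zero.1 (eq_zero_of_Q_eq_zero_of_snd_eq_zero hQ h₂)

lemma snd_ne_zero_of_Q_eq_zero {v : Pl × ℝ} (hv : Q v = 0) (hv₀ : v ≠ 0) : v.2 ≠ 0 :=
  fun h₂ => hv₀ (eq_zero_of_Q_eq_zero_of_snd_eq_zero hv h₂)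

lemma eq_smul_of_Q_eq_zero {u v : Pl × ℝ} (hu : Q u = 0) (hv : Q v = 0) (hv₀ : v ≠ 0)
    (huv : lorentzInner u v = 0) : u = (u.2 / v.2) • v := by
  rw [div_eq_inv_mul, mul_smul, smul_eq_smul_of_Q_eq_zero hu hv huv, smul_smul,
    inv_mul_cancel₀ (snd_ne_zero_of_Q_eq_zero hv hv₀), one_smul]

section Tangency

variable {c₁ c₂ c₃ : Pl × ℝ}

lemma exists_eq_add_smul_of_tangent (hne : c₁ ≠ c₂) (h₁₂ : Q (c₁ - c₂) = 0) {d : Pl × ℝ}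
    (h₁ : Q (d - c₁) = 0) (h₂ : Q (d - c₂) = 0) : ∃ μ : ℝ, d = c₁ + μ • (c₁ - c₂) := by
  have hd : d - c₂ = (d - c₁) + (c₁ - c₂) := by abel
  have horth : lorentzInner (d - c₁) (c₁ - c₂) = 0 := by
    have := Q_add (d - c₁) (c₁ - c₂)
    rw [← hd, h₁, h₂, h₁₂] at this
    linarith
  refine ⟨(d - c₁).2 / (c₁ - c₂).2, ?_⟩
  rw [← eq_smul_of_Q_eq_zero h₁ h₁₂ (sub_ne_zero.2 hne) horth]
  abel

lemma Q_add_smul_sub (h₁₂ : Q (c₁ - c₂) = 0) (μ : ℝ) :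
    Q (c₁ + μ • (c₁ - c₂) - c₃) = Q (c₁ - c₃) + 2 * μ * lorentzInner (c₁ - c₂) (c₁ - c₃) := by
  rw [show c₁ + μ • (c₁ - c₂) - c₃ = (c₁ - c₃) + μ • (c₁ - c₂) by abel, Q_add, Q_smul, h₁₂,
    lorentzInner_smul_right, lorentzInner_comm]
  ring

/-- `(u, t)` is tangent to `c` iff `lorentzInner (u, 1) c = t`, and `(u, 1)` is null. -/
lemma sub_eq_smul_of_tangent_line (h₁₂ : Q (c₁ - c₂) = 0) {u : Pl} {t : ℝ} (hu : ‖u‖ = 1)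
    (h₁ : ⟪u, c₁.1⟫ - t = c₁.2) (h₂ : ⟪u, c₂.1⟫ - t = c₂.2) :
    c₁ - c₂ = (c₁.2 - c₂.2) • (u, (1 : ℝ)) := by
  have hn : Q (u, (1 : ℝ)) = 0 := by simp [Q, hu]
  have horth : lorentzInner (c₁ - c₂) (u, 1) = 0 := by
    simp only [lorentzInner, Prod.fst_sub, Prod.snd_sub, real_inner_comm u, inner_sub_right]
    linarith
  simpa using (smul_eq_smul_of_Q_eq_zero h₁₂ hn horth).symm

def commonTangent (c₁ c₂ : Pl × ℝ) : Pl × ℝ :=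
  ((c₁.2 - c₂.2)⁻¹ • (c₁.1 - c₂.1), ⟪(c₁.2 - c₂.2)⁻¹ • (c₁.1 - c₂.1), c₁.1⟫ - c₁.2)

lemma eq_commonTangent (hne : c₁ ≠ c₂) (h₁₂ : Q (c₁ - c₂) = 0) {l : Pl × ℝ} (hl : ‖l.1‖ = 1)
    (h₁ : ⟪l.1, c₁.1⟫ - l.2 = c₁.2) (h₂ : ⟪l.1, c₂.1⟫ - l.2 = c₂.2) :
    l = commonTangent c₁ c₂ := by
  have hv := sub_eq_smul_of_tangent_line h₁₂ hl h₁ h₂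
  have hr : c₁.2 - c₂.2 ≠ 0 := snd_ne_zero_of_Q_eq_zero h₁₂ (sub_ne_zero.2 hne)
  have hu : l.1 = (c₁.2 - c₂.2)⁻¹ • (c₁.1 - c₂.1) := by
    rw [show c₁.1 - c₂.1 = (c₁ - c₂).1 from rfl, hv, Prod.smul_fst, smul_smul,
      inv_mul_cancel₀ hr, one_smul]
  refine Prod.ext hu ?_
  simp only [commonTangent, ← hu]
  linarith

lemma lorentzInner_eq_zero_of_tangent_line (h₁₂ : Q (c₁ - c₂) = 0) {u : Pl} {t : ℝ}
    (hu : ‖u‖ = 1) (h₁ : ⟪u, c₁.1⟫ - t = c₁.2) (h₂ : ⟪u, c₂.1⟫ - t = c₂.2)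
    (h₃ : ⟪u, c₃.1⟫ - t = c₃.2) : lorentzInner (c₁ - c₂) (c₁ - c₃) = 0 := by
  rw [sub_eq_smul_of_tangent_line h₁₂ hu h₁ h₂, lorentzInner_smul_left]
  simp only [lorentzInner, Prod.fst_sub, Prod.snd_sub, inner_sub_right]
  exact mul_eq_zero_of_right _ (by linarith)

lemma commonTangent_isTangent (hne : c₁ ≠ c₂) (h₁₂ : Q (c₁ - c₂) = 0)
    (h₁₃ : lorentzInner (c₁ - c₂) (c₁ - c₃) = 0) :
    ‖(commonTangent c₁ c₂).1‖ = 1 ∧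
      ⟪(commonTangent c₁ c₂).1, c₁.1⟫ - (commonTangent c₁ c₂).2 = c₁.2 ∧
      ⟪(commonTangent c₁ c₂).1, c₂.1⟫ - (commonTangent c₁ c₂).2 = c₂.2 ∧
      ⟪(commonTangent c₁ c₂).1, c₃.1⟫ - (commonTangent c₁ c₂).2 = c₃.2 := by
  have hr : c₁.2 - c₂.2 ≠ 0 := snd_ne_zero_of_Q_eq_zero h₁₂ (sub_ne_zero.2 hne)
  have hnorm : ‖c₁.1 - c₂.1‖ ^ 2 = (c₁.2 - c₂.2) ^ 2 := by
    simpa [Q, sub_eq_zero] using h₁₂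
  have hnorm' : ‖c₁.1 - c₂.1‖ = |c₁.2 - c₂.2| := by
    rw [← sq_eq_sq₀ (norm_nonneg _) (abs_nonneg _), hnorm, sq_abs]
  have tangent : ∀ c : Pl × ℝ, lorentzInner (c₁ - c₂) (c₁ - c) = 0 →
      ⟪(commonTangent c₁ c₂).1, c.1⟫ - (commonTangent c₁ c₂).2 = c.2 := by
    intro c hc
    have : ⟪c₁.1 - c₂.1, c.1⟫ = ⟪c₁.1 - c₂.1, c₁.1⟫ - (c₁.2 - c₂.2) * (c₁.2 - c.2) := by
      simp only [lorentzInner, Prod.fst_sub, Prod.snd_sub, inner_sub_right] at hc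
      linarith
    simp only [commonTangent, real_inner_smul_left, this]
    field_simp
    ring
  refine ⟨?_, by simp [commonTangent], tangent c₂ (by rw [lorentzInner_self, h₁₂]),
    tangent c₃ h₁₃⟩
  rw [commonTangent, norm_smul, norm_inv, Real.norm_eq_abs, hnorm',
    inv_mul_cancel₀ (abs_ne_zero.2 hr)]

lemma card_eq_one_of_tangent (hne : c₁ ≠ c₂) (h₁₂ : Q (c₁ - c₂) = 0)
    (hnt : ¬ (Q (c₁ - c₃) = 0 ∧ Q (c₂ - c₃) = 0)) :
    Nat.card (OrientedApolloniusSolutions c₁ c₂ c₃) = 1 := by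
  have h₂₃ : Q (c₂ - c₃) = Q (c₁ - c₃) - 2 * lorentzInner (c₁ - c₂) (c₁ - c₃) := by
    rw [show c₂ - c₃ = (c₁ - c₃) - (c₁ - c₂) by abel, Q_sub, h₁₂, lorentzInner_comm]
    ring
  rw [Nat.card_eq_one_iff_exists]
  by_cases he : lorentzInner (c₁ - c₂) (c₁ - c₃) = 0
  · have h₁₃ : Q (c₁ - c₃) ≠ 0 := fun h => hnt ⟨h, by rw [h₂₃, h, he]; ring⟩
    refine ⟨.inr ⟨commonTangent c₁ c₂, commonTangent_isTangent hne h₁₂ he⟩, ?_⟩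
    rintro (⟨d, hd₁, hd₂, hd₃⟩ | ⟨l, hl, hl₁, hl₂, -⟩)
    · obtain ⟨μ, rfl⟩ := exists_eq_add_smul_of_tangent hne h₁₂ hd₁ hd₂
      rw [Q_add_smul_sub h₁₂, he] at hd₃
      exact absurd (by linarith) h₁₃
    · exact congrArg Sum.inr (Subtype.ext (eq_commonTangent hne h₁₂ hl hl₁ hl₂))
  · set μ₀ := -Q (c₁ - c₃) / (2 * lorentzInner (c₁ - c₂) (c₁ - c₃))
    have hμ₀ : ∀ μ, Q (c₁ + μ • (c₁ - c₂) - c₃) = 0 ↔ μ = μ₀ := by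
      intro μ
      rw [Q_add_smul_sub h₁₂, eq_div_iff (by simpa using he)]
      constructor <;> intro h <;> linarith
    have hd₁ : Q (c₁ + μ₀ • (c₁ - c₂) - c₁) = 0 := by
      rw [add_sub_cancel_left, Q_smul, h₁₂, mul_zero]
    have hd₂ : Q (c₁ + μ₀ • (c₁ - c₂) - c₂) = 0 := by
      rw [show c₁ + μ₀ • (c₁ - c₂) - c₂ = (1 + μ₀) • (c₁ - c₂) by module, Q_smul, h₁₂, mul_zero]
    refine ⟨.inl ⟨c₁ + μ₀ • (c₁ - c₂), hd₁, hd₂, (hμ₀ μ₀).2 rfl⟩, ?_⟩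
    rintro (⟨d, hd₁, hd₂, hd₃⟩ | ⟨l, hl, hl₁, hl₂, hl₃⟩)
    · obtain ⟨μ, rfl⟩ := exists_eq_add_smul_of_tangent hne h₁₂ hd₁ hd₂
      exact congrArg Sum.inl (Subtype.ext (congrArg (c₁ + · • (c₁ - c₂)) ((hμ₀ μ).1 hd₃)))
    · exact absurd (lorentzInner_eq_zero_of_tangent_line h₁₂ hl hl₁ hl₂ hl₃) he

end Tangency

lemma card_orientedApolloniusSolutions_swap₁₂ (c₁ c₂ c₃ : Pl × ℝ) :
    Nat.card (OrientedApolloniusSolutions c₁ c₂ c₃) =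
      Nat.card (OrientedApolloniusSolutions c₂ c₁ c₃) :=
  Nat.card_congr <| Equiv.sumCongr
    (Equiv.subtypeEquivRight fun _ => by tauto) (Equiv.subtypeEquivRight fun _ => by tauto)

lemma card_orientedApolloniusSolutions_swap₂₃ (c₁ c₂ c₃ : Pl × ℝ) :
    Nat.card (OrientedApolloniusSolutions c₁ c₂ c₃) =
      Nat.card (OrientedApolloniusSolutions c₁ c₃ c₂) :=
  Nat.card_congr <| Equiv.sumCongr
    (Equiv.subtypeEquivRight fun _ => by tauto) (Equiv.subtypeEquivRight fun _ => by tauto)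

/-- If the three oriented circles are pairwise distinct, their discriminant vanishes,
but they are not pairwise orientedly tangent, then the oriented Apollonius problem has
exactly 1 solution. -/
theorem oriented_apollonius_one_solution (c₁ c₂ c₃ : Pl × ℝ)
    (h₁₂ : c₁ ≠ c₂) (h₁₃ : c₁ ≠ c₃) (h₂₃ : c₂ ≠ c₃)
    (hD : Q (c₁ - c₂) * Q (c₁ - c₃) * Q (c₂ - c₃) = 0)
    (hnt : ¬ (Q (c₁ - c₂) = 0 ∧ Q (c₁ - c₃) = 0 ∧ Q (c₂ - c₃) = 0)) :
    Nat.card (OrientedApolloniusSolutions c₁ c₂ c₃) = 1 := by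
  simp only [mul_eq_zero] at hD
  rcases hD with (t₁₂ | t₁₃) | t₂₃
  · exact card_eq_one_of_tangent h₁₂ t₁₂ fun ⟨t₁₃, t₂₃⟩ => hnt ⟨t₁₂, t₁₃, t₂₃⟩
  · rw [card_orientedApolloniusSolutions_swap₂₃]
    refine card_eq_one_of_tangent h₁₃ t₁₃ fun ⟨t₁₂, t₃₂⟩ => hnt ⟨t₁₂, t₁₃, ?_⟩
    rwa [Q_sub_comm]
  · rw [card_orientedApolloniusSolutions_swap₁₂, card_orientedApolloniusSolutions_swap₂₃]
    refine card_eq_one_of_tangent h₂₃ t₂₃ fun ⟨t₂₁, t₃₁⟩ => hnt ⟨?_, ?_, t₂₃⟩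
    · rwa [Q_sub_comm]
    · rwa [Q_sub_comm]
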